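/- Suppose I ⊆ [0, N−1] satisfies the Partial Order Property, let w_min = min_{x∈I} w(g_x), and let B = {i ∈ I : w(g_i) = w_min}. Then for every i ∈ B, the number of codewords of weight w_min in the coset C_i(I) satisfies A_{i, w_min}(I) ≥ 2^{|K_i|}, and consequently the total number of minimum-weight codewords satisfies A_{w_min}(I) = Σ_{i∈B} A_{i, w_min}(I) ≥ Σ_{i∈B} 2^{|K_i|}. -/

import Mathlib

/-!
Read vectors as Boolean functions of `U ⊆ [0, n)`, so that `g_i = ∏_{b ∈ T_i} x̄_b` with
`x̄_b = 1 + x_b`.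

Lower bound on `A_{i, w_min}`: a set `P` of pairs `(b, a)` with `b ∈ T_i` and `a ∈ S_i`, `a < b`
(or `a = n`, standing for the constant `1`) defines the lower-triangular affine substitution
`x̄_b ↦ x̄_b + ∑_{(b, a) ∈ P} x̄_a`. The image of `g_i` has the weight of `g_i`, since its support
is a graph over `2^{S_i}`; it determines `P`, since the affine forms are independent; and expanding
the product gives `g_i` plus rows `g_m` with `i ⪯ m` and `i < m`, all in `I` by POP, so it lies in
`C_i(I)`. Every `j ∈ K_i` is the shift of `i` by one such pair, so `|K_i|` is at most the number of
pairs.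

Decomposition of `A_{w_min}`: a nonzero codeword `∑_{h ∈ H} g_h` lies in the coset of `i = min H`.
For each `V ⊆ S_i`, summing it over the subcube `{V ∪ X : X ⊆ T_i}` gives `1`, because `g_i` is
the only row of `H` of odd weight on that subcube. Hence its weight is at least `2^{|S_i|} = w(g_i)`
and the rows are independent, which makes the cosets disjoint and leaves only `i ∈ B` at weight
`w_min`.
-/

noncomputable section
open scoped Classical
open Finset

/-- The 2×2 binary matrix [[1,0],[1,1]], as an ℕ-indexed function (zero outside range). -/
def G2 (a b : ℕ) : ZMod 2 :=
  if a = 0 ∧ b = 0 then 1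
  else if a = 1 ∧ b = 0 then 1
  else if a = 1 ∧ b = 1 then 1
  else 0

/-- `G n i c` is the (i,c) entry of the n-th Kronecker power over F₂ of [[1,0],[1,1]],
for row/column indices i, c ∈ [0, 2^n − 1] (standard row-major index flattening). -/
def G : ℕ → ℕ → ℕ → ZMod 2
  | 0 => fun i c => if i = 0 ∧ c = 0 then 1 else 0
  | n + 1 => fun i c => G2 (i / 2 ^ n) (c / 2 ^ n) * G n (i % 2 ^ n) (c % 2 ^ n)

/-- Row i of the polar transform G_N (N = 2^n), as a vector of its coordinates. -/
def g (n i : ℕ) : ℕ → ZMod 2 := fun c => G n i c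

/-- S_i ⊆ [0, n−1]: the support of the binary representation of i. -/
def S (n i : ℕ) : Finset ℕ := (Finset.range n).filter fun a => i.testBit a

/-- T_i = [0, n−1] \ S_i. -/
def T (n i : ℕ) : Finset ℕ := Finset.range n \ S n i

/-- Hamming weight of a vector whose coordinates are indexed by [0, 2^n − 1]. -/
def wt (n : ℕ) (v : ℕ → ZMod 2) : ℕ :=
  ((Finset.range (2 ^ n)).filter fun c => v c ≠ 0).card

/-- The index in [0, 2^n − 1] whose binary support is the set U ⊆ [0, n−1]. -/
def idx (U : Finset ℕ) : ℕ := ∑ a ∈ U, 2 ^ a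

/-- K_i = {j ∈ [i+1, N−1] : w(g_j) ≥ w(g_i ⊕ g_j) and w(g_i ⊕ g_j) = w(g_i)}. -/
def K (n i : ℕ) : Finset ℕ :=
  (Finset.Ico (i + 1) (2 ^ n)).filter fun j =>
    wt n (g n i + g n j) ≤ wt n (g n j) ∧ wt n (g n i + g n j) = wt n (g n i)

/-- One generating step of the partial order on [0, 2^n − 1]. -/
def poStep (n i j : ℕ) : Prop :=
  i < 2 ^ n ∧ j < 2 ^ n ∧
    (S n i ⊆ S n j ∨
      ∃ a b, a ∈ S n i ∧ b ∉ S n i ∧ a < b ∧ S n j = insert b (S n i \ {a}))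

/-- The partial order ⪯: reflexive–transitive closure of the generating relation. -/
def po (n : ℕ) : ℕ → ℕ → Prop := Relation.ReflTransGen (poStep n)

/-- Partial Order Property of an information set I ⊆ [0, 2^n − 1]. -/
def POP (n : ℕ) (I : Finset ℕ) : Prop :=
  ∀ i ∈ I, ∀ j, j < 2 ^ n → po n i j → j ∈ I

/-- The code C(I): all F₂-linear combinations (i.e. subset sums) of the rows g_i, i ∈ I. -/
def codewords (n : ℕ) (I : Finset ℕ) : Finset (ℕ → ZMod 2) :=
  I.powerset.image fun H => ∑ h ∈ H, g n h

/-- A_w(I): the number of codewords of C(I) of Hamming weight w. -/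
def A (n : ℕ) (I : Finset ℕ) (w : ℕ) : ℕ :=
  ((codewords n I).filter fun v => wt n v = w).card

/-- The coset C_i(I) = {g_i ⊕ ⊕_{h∈H} g_h : H ⊆ I \ [0,i]}. -/
def coset (n : ℕ) (I : Finset ℕ) (i : ℕ) : Finset (ℕ → ZMod 2) :=
  ((I.filter fun h => i < h).powerset).image fun H => g n i + ∑ h ∈ H, g n h

/-- A_{i,w}(I): the number of vectors of Hamming weight w in the coset C_i(I). -/
def Ai (n : ℕ) (I : Finset ℕ) (i w : ℕ) : ℕ :=
  ((coset n I i).filter fun v => wt n v = w).card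

lemma card_filter_add_card_filter {α : Type*} (s : Finset α) (p q : α → Prop)
    [DecidablePred p] [DecidablePred q] :
    (s.filter p).card + (s.filter q).card =
      (s.filter fun x => ¬(p x ↔ q x)).card + 2 * (s.filter fun x => p x ∧ q x).card := by
  simp only [card_filter, ← sum_add_distrib, mul_sum]
  refine sum_congr rfl fun x _ => ?_
  by_cases p x <;> by_cases q x <;> simp [*]

lemma union_inter_eq_of_disjoint {α : Type*} [DecidableEq α] {W T' V X : Finset α}
    (hWT : Disjoint W T') (hV : V ⊆ W) (hX : X ⊆ T') : (V ∪ X) ∩ W = V ∧ (V ∪ X) ∩ T' = X := by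
  rw [union_inter_distrib_right, union_inter_distrib_right, inter_eq_left.2 hV,
    inter_eq_left.2 hX, disjoint_iff_inter_eq_empty.1 (hWT.mono_left hV),
    disjoint_iff_inter_eq_empty.1 (hWT.symm.mono_left hX)]
  simp

lemma card_filter_inter_eq {α : Type*} [DecidableEq α] {W T' : Finset α} (hWT : Disjoint W T')
    (F : Finset α → Finset α) (hF : ∀ V, F V ⊆ T') :
    ((W ∪ T').powerset.filter fun U => U ∩ T' = F (U ∩ W)).card = 2 ^ W.card := by
  rw [← card_powerset]
  refine card_bij' (fun U _ => U ∩ W) (fun V _ => V ∪ F V) (fun U _ => mem_powerset.2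
    inter_subset_right) (fun V hV => ?_) (fun U hU => ?_) (fun V hV => ?_)
  · obtain ⟨hW, hT⟩ := union_inter_eq_of_disjoint hWT (mem_powerset.1 hV) (hF V)
    exact mem_filter.2 ⟨mem_powerset.2 (union_subset_union (mem_powerset.1 hV) (hF V)),
      by rw [hW, hT]⟩
  · obtain ⟨hU, hUT⟩ := mem_filter.1 hU
    rw [← hUT, ← inter_union_distrib_left, inter_eq_left.2 (mem_powerset.1 hU)]
  · exact (union_inter_eq_of_disjoint hWT (mem_powerset.1 hV) (hF V)).1

lemma exists_eq_insert_sdiff {X Y : Finset ℕ} {x : ℕ} (hx : x ∉ X) (hYX : (Y \ X).card = 1)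
    (hXY : (X \ Y).card ≤ 1) : ∃ b ∉ X, ∃ a ∈ insert x X, Y = insert b (X \ {a}) := by
  obtain ⟨b, hb⟩ := card_eq_one.1 hYX
  obtain ⟨a, ha, hXa⟩ : ∃ a ∈ insert x X, X \ {a} = X ∩ Y := by
    rcases Nat.le_one_iff_eq_zero_or_eq_one.1 hXY with h0 | h1
    · refine ⟨x, mem_insert_self x X, ?_⟩
      rw [inter_eq_left.2 (sdiff_eq_empty_iff_subset.1 (card_eq_zero.1 h0)),
        sdiff_singleton_eq_erase, erase_eq_of_notMem hx]
    · obtain ⟨a, ha⟩ := card_eq_one.1 h1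
      refine ⟨a, mem_insert_of_mem (mem_sdiff.1 (ha ▸ mem_singleton_self a)).1, ?_⟩
      rw [← ha, sdiff_sdiff_right_self]
      rfl
  refine ⟨b, (mem_sdiff.1 (hb ▸ mem_singleton_self b)).2, a, ha, ?_⟩
  rw [hXa, insert_eq, ← hb, inter_comm, sdiff_union_inter]

lemma exists_subset_sum_eq {α β M : Type*} [AddCommGroup M] [Module (ZMod 2) M] {s : Finset α}
    {t : Finset β} {f : α → β} (hf : ∀ a ∈ s, f a ∈ t) (v : β → M) :
    ∃ u ⊆ t, ∑ a ∈ s, v (f a) = ∑ b ∈ u, v b := by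
  have hmem : ∑ a ∈ s, v (f a) ∈ Submodule.span (ZMod 2) (v '' ↑t) :=
    Submodule.sum_mem _ fun a ha => Submodule.subset_span ⟨f a, hf a ha, rfl⟩
  obtain ⟨c, hc⟩ := (Submodule.mem_span_image_finset_iff_exists_fun' (ZMod 2)).1 hmem
  refine ⟨t.filter (c · = 1), filter_subset _ _, ?_⟩
  rw [← hc, sum_filter]
  refine sum_congr rfl fun b _ => ?_
  rcases (by decide : ∀ x : ZMod 2, x = 0 ∨ x = 1) (c b) with h | h <;> simp [h]

lemma natCast_two_pow_eq_ite (k : ℕ) : ((2 ^ k : ℕ) : ZMod 2) = if k = 0 then 1 else 0 := by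
  cases k with
  | zero => simp
  | succ k => simp [pow_succ, show (2 : ZMod 2) = 0 from rfl]

lemma mem_S {n i a : ℕ} : a ∈ S n i ↔ a < n ∧ i.testBit a := by simp [S]

lemma S_subset_range (n i : ℕ) : S n i ⊆ range n := filter_subset _ _

lemma notMem_S_self (n i : ℕ) : n ∉ S n i := fun h => by simpa using S_subset_range n i h

lemma disjoint_S_T (n i : ℕ) : Disjoint (S n i) (T n i) := disjoint_sdiff

lemma S_union_T (n i : ℕ) : S n i ∪ T n i = range n := union_sdiff_of_subset (S_subset_range n i)

lemma testBit_idx {U : Finset ℕ} {a : ℕ} : (idx U).testBit a ↔ a ∈ U := by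
  rw [← Nat.mem_bitIndices, ← List.mem_toFinset, idx, Finset.toFinset_bitIndices_sum_two_pow]

lemma idx_lt {n : ℕ} {U : Finset ℕ} (hU : U ⊆ range n) : idx U < 2 ^ n :=
  Nat.geomSum_lt le_rfl fun _ ha => mem_range.1 (hU ha)

lemma S_idx {n : ℕ} {U : Finset ℕ} (hU : U ⊆ range n) : S n (idx U) = U := by
  ext a
  rw [mem_S, testBit_idx]
  exact ⟨And.right, fun ha => ⟨mem_range.1 (hU ha), ha⟩⟩

lemma idx_S {n i : ℕ} (hi : i < 2 ^ n) : idx (S n i) = i := by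
  have : S n i = i.bitIndices.toFinset := by
    ext a
    rw [mem_S, List.mem_toFinset, Nat.mem_bitIndices]
    refine ⟨And.right, fun ha => ⟨?_, ha⟩⟩
    by_contra! hna
    have := Nat.ge_two_pow_of_testBit ha
    have := Nat.pow_le_pow_right two_pos hna
    omega
  rw [this, idx, Finset.sum_toFinset_bitIndices_two_pow]

lemma idx_mono {U V : Finset ℕ} (h : U ⊆ V) : idx U ≤ idx V :=
  sum_le_sum_of_subset h

lemma idx_insert_sdiff_add {X : Finset ℕ} {a b : ℕ} (ha : a ∈ X) (hb : b ∉ X) :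
    idx (insert b (X \ {a})) + 2 ^ a = idx X + 2 ^ b := by
  rw [idx, sum_insert fun h => hb (mem_sdiff.1 h).1, sdiff_singleton_eq_erase, idx,
    ← add_sum_erase _ _ ha]
  ring

lemma g_eq_zero_of_le {n i c : ℕ} (hc : 2 ^ n ≤ c) : g n i c = 0 := by
  induction n generalizing i c with
  | zero => simp [g, G, show c ≠ 0 by omega]
  | succ n ih =>
    show G2 _ _ * G n _ _ = 0
    rcases lt_or_ge (c % 2 ^ n) (2 ^ n) with h | h
    · have : 2 ≤ c / 2 ^ n :=
        (Nat.le_div_iff_mul_le (by positivity)).2 (by rw [pow_succ] at hc; omega)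
      simp [G2, show c / 2 ^ n ≠ 0 by omega, show c / 2 ^ n ≠ 1 by omega]
    · rw [show G n _ _ = 0 from ih h, mul_zero]

lemma div_two_pow_eq_ite {n x : ℕ} (hx : x < 2 ^ (n + 1)) :
    x / 2 ^ n = if x.testBit n then 1 else 0 := by
  have h2 : x / 2 ^ n < 2 := Nat.div_lt_of_lt_mul (by rwa [pow_succ] at hx)
  rw [Nat.testBit_eq_decide_div_mod_eq]
  generalize x / 2 ^ n = q at h2 ⊢
  interval_cases q <;> simp

lemma g_apply_eq_ite_testBit {n i c : ℕ} (hi : i < 2 ^ n) (hc : c < 2 ^ n) :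
    g n i c = if ∀ a < n, c.testBit a → i.testBit a then 1 else 0 := by
  induction n generalizing i c with
  | zero => simp [g, G, show i = 0 by omega, show c = 0 by omega]
  | succ n ih =>
    have hmod : ∀ x, x % 2 ^ n < 2 ^ n := fun x => Nat.mod_lt _ (by positivity)
    have hlow : (∀ a < n, (c % 2 ^ n).testBit a → (i % 2 ^ n).testBit a) ↔
        ∀ a < n, c.testBit a → i.testBit a := by
      simp +contextual [Nat.testBit_mod_two_pow]
    have hsplit : (∀ a < n + 1, c.testBit a → i.testBit a) ↔
        (∀ a < n, c.testBit a → i.testBit a) ∧ (c.testBit n → i.testBit n) :=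
      ⟨fun h => ⟨fun a ha => h a (by omega), h n (by omega)⟩,
        fun h a ha => (Nat.lt_succ_iff_lt_or_eq.1 ha).elim (h.1 a) (· ▸ h.2)⟩
    show G2 _ _ * g n _ _ = _
    rw [ih (hmod i) (hmod c), div_two_pow_eq_ite hi, div_two_pow_eq_ite hc]
    simp only [hlow, hsplit]
    by_cases hl : ∀ a < n, c.testBit a → i.testBit a <;>
      cases c.testBit n <;> cases i.testBit n <;> simp [G2, hl]

lemma g_apply {n i c : ℕ} (hi : i < 2 ^ n) (hc : c < 2 ^ n) :
    g n i c = if S n c ⊆ S n i then 1 else 0 := by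
  rw [g_apply_eq_ite_testBit hi hc]
  refine if_congr ?_ rfl rfl
  simp +contextual [Finset.subset_iff, mem_S]

lemma g_idx {n i : ℕ} {U : Finset ℕ} (hi : i < 2 ^ n) (hU : U ⊆ range n) :
    g n i (idx U) = if U ⊆ S n i then 1 else 0 := by
  rw [g_apply hi (idx_lt hU), S_idx hU]

lemma wt_eq_card_powerset (n : ℕ) (v : ℕ → ZMod 2) :
    wt n v = ((range n).powerset.filter fun U => v (idx U) ≠ 0).card := by
  refine card_bij' (fun c _ => S n c) (fun U _ => idx U) (fun c hc => ?_) (fun U hU => ?_)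
    (fun c hc => idx_S (mem_range.1 (mem_filter.1 hc).1))
    (fun U hU => S_idx (mem_powerset.1 (mem_filter.1 hU).1))
  · rw [mem_filter, mem_range] at hc
    exact mem_filter.2 ⟨mem_powerset.2 (S_subset_range n c), by rw [idx_S hc.1]; exact hc.2⟩
  · rw [mem_filter, mem_powerset] at hU
    exact mem_filter.2 ⟨mem_range.2 (idx_lt hU.1), hU.2⟩

lemma filter_subset_eq_powerset {n : ℕ} {W : Finset ℕ} (hW : W ⊆ range n) :
    (range n).powerset.filter (· ⊆ W) = W.powerset := by
  ext U
  simp only [mem_filter, mem_powerset]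
  exact ⟨And.right, fun h => ⟨h.trans hW, h⟩⟩

lemma wt_g {n i : ℕ} (hi : i < 2 ^ n) : wt n (g n i) = 2 ^ (S n i).card := by
  rw [wt_eq_card_powerset, ← card_powerset, ← filter_subset_eq_powerset (S_subset_range n i)]
  refine congrArg card (filter_congr fun U hU => ?_)
  rw [g_idx hi (mem_powerset.1 hU)]
  split_ifs with h <;> simp [h]

lemma wt_g_add_g {n i j : ℕ} (hi : i < 2 ^ n) (hj : j < 2 ^ n) :
    wt n (g n i + g n j) + 2 * 2 ^ (S n i ∩ S n j).card = 2 ^ (S n i).card + 2 ^ (S n j).card := by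
  have hcard : ∀ W ⊆ range n, ((range n).powerset.filter (· ⊆ W)).card = 2 ^ W.card := by
    intro W hW
    rw [filter_subset_eq_powerset hW, card_powerset]
  rw [← hcard _ (S_subset_range n i), ← hcard _ (S_subset_range n j),
    ← hcard _ ((inter_subset_left).trans (S_subset_range n i)), card_filter_add_card_filter,
    wt_eq_card_powerset]
  simp only [subset_inter_iff]
  congr 2
  refine filter_congr fun U hU => ?_
  rw [Pi.add_apply, g_idx hi (mem_powerset.1 hU), g_idx hj (mem_powerset.1 hU)]
  by_cases U ⊆ S n i <;> by_cases U ⊆ S n j <;> simp [*, show (1 : ZMod 2) + 1 = 0 from rfl]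

lemma wt_zero (n : ℕ) : wt n 0 = 0 := by simp [wt]

lemma card_sdiff_S_of_mem_K {n i j : ℕ} (hi : i < 2 ^ n) (hj : j ∈ K n i) :
    (S n j \ S n i).card = 1 ∧ (S n i \ S n j).card ≤ 1 := by
  obtain ⟨hj, hle, heq⟩ := mem_filter.1 hj
  have hjn := (mem_Ico.1 hj).2
  have hw := wt_g_add_g hi hjn
  rw [wt_g hjn] at hle
  rw [wt_g hi] at heq
  have hYcard : (S n j).card = (S n i ∩ S n j).card + 1 :=
    Nat.pow_right_injective le_rfl (by dsimp only; rw [pow_succ]; omega)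
  have hXcard : (S n i).card ≤ (S n i ∩ S n j).card + 1 :=
    hYcard ▸ (Nat.pow_le_pow_iff_right (by norm_num)).1 (heq ▸ hle)
  have hX := card_sdiff_add_card_inter (S n i) (S n j)
  have hY := card_sdiff_add_card_inter (S n j) (S n i)
  rw [inter_comm] at hY
  omega

/-- `(b, a)` stands for the index `idx (insert b (S_i \ {a}))`: `i` with its bit `a` moved up to
`b`, or with `b` added when `a = n`. -/
def shiftPairs (n i : ℕ) : Finset (ℕ × ℕ) :=
  (T n i ×ˢ insert n (S n i)).filter fun p => p.2 < p.1 ∨ p.2 = n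

lemma exists_mem_shiftPairs_of_mem_K {n i j : ℕ} (hi : i < 2 ^ n) (hj : j ∈ K n i) :
    ∃ p ∈ shiftPairs n i, j = idx (insert p.1 (S n i \ {p.2})) := by
  obtain ⟨hYX, hXY⟩ := card_sdiff_S_of_mem_K hi hj
  obtain ⟨hij, hjn⟩ := mem_Ico.1 (mem_filter.1 hj).1
  obtain ⟨b, hbS, a, ha, hS⟩ := exists_eq_insert_sdiff (notMem_S_self n i) hYX hXY
  have hbT : b ∈ T n i := mem_sdiff.2 ⟨S_subset_range n j (hS ▸ mem_insert_self _ _), hbS⟩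
  have hab : a < b ∨ a = n := by
    rcases mem_insert.1 ha with rfl | haS
    · exact Or.inr rfl
    · have := idx_insert_sdiff_add haS hbS
      rw [← hS, idx_S hi, idx_S hjn] at this
      exact Or.inl ((Nat.pow_lt_pow_iff_right (show 1 < 2 by norm_num)).1 (by omega))
  exact ⟨(b, a), mem_filter.2 ⟨mem_product.2 ⟨hbT, ha⟩, hab⟩, by rw [← hS, idx_S hjn]⟩

lemma card_K_le_card_shiftPairs {n i : ℕ} (hi : i < 2 ^ n) :
    (K n i).card ≤ (shiftPairs n i).card := by
  refine (card_le_card fun j hj => ?_).trans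
    (card_image_le (f := fun p => idx (insert p.1 (S n i \ {p.2}))))
  obtain ⟨p, hp, rfl⟩ := exists_mem_shiftPairs_of_mem_K hi hj
  exact mem_image_of_mem _ hp

lemma T_inter_eq_empty_iff {n i : ℕ} {U : Finset ℕ} (hU : U ⊆ range n) :
    T n i ∩ U = ∅ ↔ U ⊆ S n i := by
  refine ⟨fun H x hx => ?_, fun H => eq_empty_iff_forall_notMem.2 fun x hx => ?_⟩
  · by_contra hxS
    exact eq_empty_iff_forall_notMem.1 H x (mem_inter.2 ⟨mem_sdiff.2 ⟨hU hx, hxS⟩, hx⟩)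
  · exact (mem_sdiff.1 (mem_inter.1 hx).1).2 (H (mem_inter.1 hx).2)

lemma sum_powerset_T_g {n i h : ℕ} {V : Finset ℕ} (hh : h < 2 ^ n) (hV : V ⊆ S n i) :
    ∑ X ∈ (T n i).powerset, g n h (idx (V ∪ X)) =
      if V ⊆ S n h ∧ S n h ⊆ S n i then 1 else 0 := by
  have hVX : ∀ X ∈ (T n i).powerset, V ∪ X ⊆ range n := fun X hX =>
    union_subset (hV.trans (S_subset_range n i)) ((mem_powerset.1 hX).trans sdiff_subset)
  rw [sum_congr rfl fun X hX => g_idx hh (hVX X hX), sum_boole]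
  by_cases hVh : V ⊆ S n h
  · have hfilter : (T n i).powerset.filter (fun X => V ∪ X ⊆ S n h) = (T n i ∩ S n h).powerset := by
      ext X
      simp only [mem_filter, mem_powerset, union_subset_iff, subset_inter_iff]
      tauto
    simp only [hfilter, card_powerset, natCast_two_pow_eq_ite, card_eq_zero,
      T_inter_eq_empty_iff (S_subset_range n h), hVh, true_and]
  · rw [filter_false_of_mem fun X _ hX => hVh (subset_union_left.trans hX)]
    simp [hVh]

lemma sum_powerset_T_sum_g {n i : ℕ} {H V : Finset ℕ} (hH : ∀ h ∈ H, h < 2 ^ n) (hi : i ∈ H)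
    (hmin : ∀ h ∈ H, i ≤ h) (hV : V ⊆ S n i) :
    ∑ X ∈ (T n i).powerset, (∑ h ∈ H, g n h) (idx (V ∪ X)) = 1 := by
  simp only [Finset.sum_apply]
  rw [sum_comm, sum_congr rfl fun h hh => sum_powerset_T_g (hH h hh) hV]
  refine (sum_eq_single_of_mem i hi fun h hh hne => if_neg fun ⟨_, hhi⟩ => hne ?_).trans
    (if_pos ⟨hV, subset_rfl⟩)
  have := idx_mono hhi
  rw [idx_S (hH h hh), idx_S (hH i hi)] at this
  exact le_antisymm this (hmin h hh)

lemma wt_g_le_wt_sum_g {n i : ℕ} {H : Finset ℕ} (hH : ∀ h ∈ H, h < 2 ^ n) (hi : i ∈ H)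
    (hmin : ∀ h ∈ H, i ≤ h) : wt n (g n i) ≤ wt n (∑ h ∈ H, g n h) := by
  have hX : ∀ V ∈ (S n i).powerset, ∃ X ∈ (T n i).powerset, (∑ h ∈ H, g n h) (idx (V ∪ X)) ≠ 0 :=
    fun V hV => exists_ne_zero_of_sum_ne_zero <| by
      rw [sum_powerset_T_sum_g hH hi hmin (mem_powerset.1 hV)]; exact one_ne_zero
  choose! X hXT hXne using hX
  have hVX : ∀ V ∈ (S n i).powerset, (V ∪ X V) ∩ S n i = V ∧ (V ∪ X V) ∩ T n i = X V :=
    fun V hV => union_inter_eq_of_disjoint (disjoint_S_T n i) (mem_powerset.1 hV)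
      (mem_powerset.1 (hXT V hV))
  rw [wt_g (hH i hi), ← card_powerset, wt_eq_card_powerset]
  refine card_le_card_of_injOn (fun V => V ∪ X V) (fun V hV => mem_filter.2 ⟨mem_powerset.2
    (S_union_T n i ▸ union_subset_union (mem_powerset.1 hV) (mem_powerset.1 (hXT V hV))),
    hXne V hV⟩) fun V hV V' hV' hVV' => ?_
  rw [← (hVX V hV).1, ← (hVX V' hV').1]
  exact congrArg (· ∩ S n i) hVV'

lemma sum_g_ne_zero {n : ℕ} {H : Finset ℕ} (hH : ∀ h ∈ H, h < 2 ^ n) (hne : H.Nonempty) :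
    ∑ h ∈ H, g n h ≠ 0 := fun h0 => by
  have := sum_powerset_T_sum_g hH (H.min'_mem hne) (fun h hh => H.min'_le h hh) (empty_subset _)
  rw [h0] at this
  simp at this

lemma sum_g_injective {n : ℕ} {M M' : Finset ℕ} (hM : ∀ h ∈ M, h < 2 ^ n)
    (hM' : ∀ h ∈ M', h < 2 ^ n) (h : ∑ m ∈ M, g n m = ∑ m ∈ M', g n m) : M = M' := by
  have hneg : ∀ v : ℕ → ZMod 2, -v = v := fun v => funext fun c => ZMod.neg_eq_self_mod_two _
  have hD : ∑ m ∈ (M \ M') ∪ (M' \ M), g n m = 0 := by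
    rw [sum_union disjoint_sdiff_sdiff, ← hneg (∑ m ∈ M' \ M, g n m), ← sub_eq_add_neg,
      sum_sdiff_sub_sum_sdiff, h, sub_self]
  by_contra hne
  refine sum_g_ne_zero (fun m hm => ?_) ?_ hD
  · rcases mem_union.1 hm with hm | hm
    exacts [hM m (mem_sdiff.1 hm).1, hM' m (mem_sdiff.1 hm).1]
  · rw [nonempty_iff_ne_empty, Ne, union_eq_empty, sdiff_eq_empty_iff_subset,
      sdiff_eq_empty_iff_subset]
    exact fun hsub => hne (hsub.1.antisymm hsub.2)

lemma mem_coset_iff {n i : ℕ} {I : Finset ℕ} {v : ℕ → ZMod 2} (hi : i ∈ I) :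
    v ∈ coset n I i ↔ ∃ H ⊆ I, i ∈ H ∧ (∀ h ∈ H, i ≤ h) ∧ ∑ h ∈ H, g n h = v := by
  constructor
  · rintro hv
    obtain ⟨H, hH, rfl⟩ := mem_image.1 hv
    have hH : ∀ h ∈ H, h ∈ I ∧ i < h := fun h hh => mem_filter.1 (mem_powerset.1 hH hh)
    have hiH : i ∉ H := fun h => (hH i h).2.false
    refine ⟨insert i H, insert_subset hi fun h hh => (hH h hh).1, mem_insert_self i H,
      fun h hh => ?_, sum_insert hiH⟩
    rcases mem_insert.1 hh with rfl | hh
    exacts [le_rfl, (hH h hh).2.le]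
  · rintro ⟨H, hHI, hiH, hmin, rfl⟩
    refine mem_image.2 ⟨H.erase i, mem_powerset.2 fun h hh => ?_, add_sum_erase H _ hiH⟩
    obtain ⟨hhi, hhH⟩ := mem_erase.1 hh
    exact mem_filter.2 ⟨hHI hhH, lt_of_le_of_ne (hmin h hhH) (Ne.symm hhi)⟩

lemma disjoint_coset {n i i' : ℕ} {I : Finset ℕ} (hIr : ∀ x ∈ I, x < 2 ^ n) (hi : i ∈ I)
    (hi' : i' ∈ I) (hne : i ≠ i') : Disjoint (coset n I i) (coset n I i') := by
  refine disjoint_left.2 fun v hv hv' => hne ?_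
  obtain ⟨H, hHI, hiH, hmin, rfl⟩ := (mem_coset_iff hi).1 hv
  obtain ⟨H', hH'I, hi'H', hmin', hHH'⟩ := (mem_coset_iff hi').1 hv'
  obtain rfl := sum_g_injective (fun h hh => hIr h (hH'I hh)) (fun h hh => hIr h (hHI hh)) hHH'
  exact le_antisymm (hmin i' hi'H') (hmin' i hiH)

lemma filter_codewords_eq_biUnion {n w : ℕ} {I : Finset ℕ} (hw : w ≠ 0) :
    (codewords n I).filter (fun v => wt n v = w) =
      I.biUnion fun i => (coset n I i).filter fun v => wt n v = w := by
  ext v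
  simp only [mem_filter, mem_biUnion, codewords, mem_image, mem_powerset]
  constructor
  · rintro ⟨⟨H, hHI, rfl⟩, hwv⟩
    have hne : H.Nonempty := nonempty_iff_ne_empty.2 fun h => hw (by simp [← hwv, h, wt_zero])
    have hiI := hHI (H.min'_mem hne)
    exact ⟨_, hiI, (mem_coset_iff hiI).2 ⟨H, hHI, H.min'_mem hne, fun h => H.min'_le h, rfl⟩, hwv⟩
  · rintro ⟨i, hiI, hv, hwv⟩
    obtain ⟨H, hHI, -, -, rfl⟩ := (mem_coset_iff hiI).1 hv
    exact ⟨⟨H, hHI, rfl⟩, hwv⟩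

lemma A_eq_sum_Ai {n w : ℕ} {I : Finset ℕ} (hIr : ∀ x ∈ I, x < 2 ^ n) (hw : w ≠ 0) :
    A n I w = ∑ i ∈ I, Ai n I i w := by
  rw [A, filter_codewords_eq_biUnion hw, card_biUnion fun i hi i' hi' hne =>
    (disjoint_coset hIr hi hi' hne).mono (filter_subset _ _) (filter_subset _ _)]
  rfl

lemma Ai_eq_zero_of_lt_wt {n i w : ℕ} {I : Finset ℕ} (hIr : ∀ x ∈ I, x < 2 ^ n) (hi : i ∈ I)
    (hw : w < wt n (g n i)) : Ai n I i w = 0 := by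
  refine card_eq_zero.2 (filter_eq_empty_iff.2 fun v hv hwv => ?_)
  obtain ⟨H, hHI, hiH, hmin, rfl⟩ := (mem_coset_iff hi).1 hv
  have := wt_g_le_wt_sum_g (fun h hh => hIr h (hHI hh)) hiH hmin
  omega

lemma le_of_poStep {n i j : ℕ} (h : poStep n i j) : i ≤ j := by
  obtain ⟨hi, hj, hsub | ⟨a, b, ha, hb, hab, hS⟩⟩ := h
  · simpa only [idx_S hi, idx_S hj] using idx_mono hsub
  · have := idx_insert_sdiff_add ha hb
    rw [← hS, idx_S hi, idx_S hj] at this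
    have := Nat.pow_lt_pow_right (show 1 < 2 by norm_num) hab
    omega

lemma le_of_po {n i j : ℕ} (h : po n i j) : i ≤ j := by
  induction h with
  | refl => exact le_rfl
  | tail _ hs ih => exact ih.trans (le_of_poStep hs)

/-- `σ` only makes the targets distinct: move each bit of `W \ V` up to its target in `V \ W`,
then add the remaining bits of `V`. -/
lemma po_idx_of_forall_exists {n : ℕ} {W V : Finset ℕ} (hW : W ⊆ range n) (hV : V ⊆ range n)
    (σ : ℕ → ℕ) (h : ∀ a ∈ W \ V, ∃ b ∈ V \ W, a < b ∧ σ b = a) : po n (idx W) (idx V) := by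
  obtain ⟨k, hk⟩ : ∃ k, (W \ V).card = k := ⟨_, rfl⟩
  induction k generalizing W with
  | zero =>
    refine Relation.ReflTransGen.single ⟨idx_lt hW, idx_lt hV, Or.inl ?_⟩
    rw [S_idx hW, S_idx hV]
    exact sdiff_eq_empty_iff_subset.1 (card_eq_zero.1 hk)
  | succ k ih =>
    obtain ⟨a, ha⟩ := card_pos.1 (by omega : 0 < (W \ V).card)
    obtain ⟨b, hb, hab, hσb⟩ := h a ha
    obtain ⟨haW, haV⟩ := mem_sdiff.1 ha
    obtain ⟨hbV, hbW⟩ := mem_sdiff.1 hb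
    set W' := insert b (W \ {a})
    have hW' : W' ⊆ range n := insert_subset (hV hbV) (sdiff_subset.trans hW)
    have hstep : poStep n (idx W) (idx W') := ⟨idx_lt hW, idx_lt hW',
      Or.inr ⟨a, b, by rwa [S_idx hW], by rwa [S_idx hW], hab, by rw [S_idx hW', S_idx hW]⟩⟩
    have hW'V : W' \ V = (W \ V).erase a := by
      ext x
      simp only [W', mem_sdiff, mem_insert, mem_singleton, mem_erase]
      constructor
      · rintro ⟨rfl | ⟨hxW, hxa⟩, hxV⟩
        exacts [absurd hbV hxV, ⟨hxa, hxW, hxV⟩]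
      · rintro ⟨hxa, hxW, hxV⟩
        exact ⟨Or.inr ⟨hxW, hxa⟩, hxV⟩
    refine Relation.ReflTransGen.head hstep (ih hW' (fun a' ha' => ?_) ?_)
    · obtain ⟨ha'a, ha'⟩ := mem_erase.1 (hW'V ▸ ha')
      obtain ⟨b', hb', ha'b', hσb'⟩ := h a' ha'
      refine ⟨b', mem_sdiff.2 ⟨(mem_sdiff.1 hb').1, ?_⟩, ha'b', hσb'⟩
      simp only [W', mem_insert, mem_sdiff, not_or]
      exact ⟨fun hbb => ha'a (hσb' ▸ hbb ▸ hσb), fun h => (mem_sdiff.1 hb').2 h.1⟩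
    · rw [hW'V, card_erase_of_mem ha, hk, Nat.add_sub_cancel]

/-- `x̄_a = 1 + x_a` at the point `U`; on subsets of `range n` it is the constant `1` when
`a ≥ n`. -/
def xbar (a : ℕ) (U : Finset ℕ) : ZMod 2 := if a ∉ U then 1 else 0

lemma xbar_add_ne_zero_iff {b : ℕ} {U : Finset ℕ} (s : ZMod 2) :
    xbar b U + s ≠ 0 ↔ (b ∈ U ↔ s = 1) := by
  unfold xbar
  by_cases hb : b ∈ U <;> simp only [hb, not_true, not_false_eq_true, if_true, if_false] <;>
    revert s <;> decide

lemma xbar_eq_xbar_inter {n i a : ℕ} {U : Finset ℕ} (hU : U ⊆ range n)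
    (ha : a ∈ insert n (S n i)) : xbar a U = xbar a (U ∩ S n i) := by
  rcases mem_insert.1 ha with rfl | ha
  · have : a ∉ U := fun h => (mem_range.1 (hU h)).false
    simp [xbar, this]
  · simp [xbar, ha]

lemma sum_xbar_empty_add_sum_xbar_singleton (A : Finset ℕ) (a : ℕ) :
    ∑ x ∈ A, xbar x ∅ + ∑ x ∈ A, xbar x {a} = if a ∈ A then 1 else 0 := by
  rw [← sum_add_distrib, ← sum_ite_eq' A a fun _ => (1 : ZMod 2)]
  refine sum_congr rfl fun x _ => ?_
  by_cases hx : x = a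
  · simp [xbar, hx]
  · simp [xbar, hx, eq_comm]; decide

lemma sum_xbar_eq_ite {W A : Finset ℕ} {x : ℕ} (hx : x ∉ W) (hA : A ⊆ insert x W) :
    ∑ a ∈ A, xbar a W = if x ∈ A then 1 else 0 := by
  rw [← sum_ite_eq' A x fun _ => (1 : ZMod 2)]
  refine sum_congr rfl fun a ha => ?_
  rcases mem_insert.1 (hA ha) with rfl | haW
  · simp [xbar, hx]
  · simp [xbar, haW, show a ≠ x from fun h => hx (h ▸ haW)]

lemma eq_of_forall_sum_xbar_eq {W A A' : Finset ℕ} {x : ℕ} (hx : x ∉ W) (hA : A ⊆ insert x W)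
    (hA' : A' ⊆ insert x W) (h : ∀ V ⊆ W, ∑ a ∈ A, xbar a V = ∑ a ∈ A', xbar a V) : A = A' := by
  have hite : ∀ a ∈ insert x W,
      (if a ∈ A then (1 : ZMod 2) else 0) = if a ∈ A' then 1 else 0 := by
    intro a ha
    rcases mem_insert.1 ha with rfl | ha
    · rw [← sum_xbar_eq_ite hx hA, ← sum_xbar_eq_ite hx hA', h W subset_rfl]
    · rw [← sum_xbar_empty_add_sum_xbar_singleton, ← sum_xbar_empty_add_sum_xbar_singleton,
        h ∅ (empty_subset W), h {a} (singleton_subset_iff.2 ha)]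
  ext a
  by_cases ha : a ∈ insert x W
  · have := hite a ha
    by_cases a ∈ A <;> by_cases a ∈ A' <;> simp_all
  · exact iff_of_false (fun h => ha (hA h)) (fun h => ha (hA' h))

def shiftFibre (P : Finset (ℕ × ℕ)) (b : ℕ) : Finset ℕ := (P.filter fun p => p.1 = b).image Prod.snd

/-- `g_i = ∏_{b ∈ T_i} x̄_b` after the substitution `x̄_b ↦ x̄_b + ∑_{(b, a) ∈ P} x̄_a`, where
`x̄_n = 1`. -/
def shiftedRow (n i : ℕ) (P : Finset (ℕ × ℕ)) : ℕ → ZMod 2 := fun c =>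
  if c < 2 ^ n then ∏ b ∈ T n i, ∑ a ∈ insert b (shiftFibre P b), xbar a (S n c) else 0

def shiftChoices (n i : ℕ) (P : Finset (ℕ × ℕ)) : Finset (T n i → ℕ) :=
  Fintype.piFinset fun b => insert b.1 (shiftFibre P b)

/-- The row `g_m` equal to the monomial `∏_b x̄_{σ b}` (factors `x̄_n = 1` drop out). -/
def choiceIdx {n i : ℕ} (σ : T n i → ℕ) : ℕ := idx (range n \ univ.image σ)

/-- The support of `shiftedRow n i P` is the graph of `flipSet n i P : 2^{S_i} → 2^{T_i}`. -/
def flipSet (n i : ℕ) (P : Finset (ℕ × ℕ)) (V : Finset ℕ) : Finset ℕ :=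
  (T n i).filter fun b => ∑ a ∈ shiftFibre P b, xbar a V = 1

section shiftedRow

variable {n i : ℕ} {P P' : Finset (ℕ × ℕ)}

lemma mem_shiftFibre {a b : ℕ} : a ∈ shiftFibre P b ↔ (b, a) ∈ P := by
  simp [shiftFibre]

lemma shiftFibre_subset (hP : P ⊆ shiftPairs n i) (b : ℕ) : shiftFibre P b ⊆ insert n (S n i) :=
  fun _ ha => (mem_product.1 (mem_filter.1 (hP (mem_shiftFibre.1 ha))).1).2

lemma lt_of_mem_shiftFibre (hP : P ⊆ shiftPairs n i) {a b : ℕ} (ha : a ∈ shiftFibre P b)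
    (han : a ≠ n) : a < b :=
  (mem_filter.1 (hP (mem_shiftFibre.1 ha))).2.resolve_right han

lemma notMem_shiftFibre_of_mem_T (hP : P ⊆ shiftPairs n i) {b b' : ℕ} (hb : b ∈ T n i) :
    b ∉ shiftFibre P b' := fun h => by
  rcases mem_insert.1 (shiftFibre_subset hP b' h) with rfl | hS
  exacts [(mem_range.1 (mem_sdiff.1 hb).1).false, (mem_sdiff.1 hb).2 hS]

lemma choiceIdx_lt (σ : T n i → ℕ) : choiceIdx σ < 2 ^ n := idx_lt sdiff_subset

lemma S_choiceIdx (σ : T n i → ℕ) : S n (choiceIdx σ) = range n \ univ.image σ :=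
  S_idx sdiff_subset

lemma choiceIdx_val (hin : i < 2 ^ n) : choiceIdx (Subtype.val : T n i → ℕ) = i := by
  rw [choiceIdx, univ_eq_attach, attach_image_val, T,
    Finset.sdiff_sdiff_eq_self (S_subset_range n i), idx_S hin]

/-- A coordinate `b ∈ T_i` can only be picked by its own factor. -/
lemma mem_S_choiceIdx_of_apply_ne (hP : P ⊆ shiftPairs n i) {σ : T n i → ℕ}
    (hσ : σ ∈ shiftChoices n i P) {b : T n i} (hb : σ b ≠ b) : b.1 ∈ S n (choiceIdx σ) := by
  rw [S_choiceIdx]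
  refine mem_sdiff.2 ⟨(mem_sdiff.1 b.2).1, fun hbσ => hb ?_⟩
  obtain ⟨b', -, hb'⟩ := mem_image.1 hbσ
  rcases mem_insert.1 (Fintype.mem_piFinset.1 hσ b') with h | h
  · rwa [← Subtype.ext (h.symm.trans hb')]
  · exact absurd (hb' ▸ h) (notMem_shiftFibre_of_mem_T hP b.2)

lemma po_choiceIdx (hin : i < 2 ^ n) (hP : P ⊆ shiftPairs n i) {σ : T n i → ℕ}
    (hσ : σ ∈ shiftChoices n i P) : po n i (choiceIdx σ) := by
  suffices po n (idx (S n i)) (choiceIdx σ) by rwa [idx_S hin] at this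
  refine po_idx_of_forall_exists (S_subset_range n i) sdiff_subset
    (fun b => if h : b ∈ T n i then σ ⟨b, h⟩ else 0) fun a ha => ?_
  obtain ⟨haS, haV⟩ := mem_sdiff.1 ha
  have han : a < n := mem_range.1 (S_subset_range n i haS)
  obtain ⟨b, -, hba⟩ := mem_image.1 (of_not_not fun h => haV (mem_sdiff.2 ⟨mem_range.2 han, h⟩))
  have hσb : σ b ≠ b := fun h => (mem_sdiff.1 b.2).2 (h ▸ hba ▸ haS)
  have haF : a ∈ shiftFibre P b :=
    hba ▸ (mem_insert.1 (Fintype.mem_piFinset.1 hσ b)).resolve_left hσb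
  refine ⟨b, mem_sdiff.2 ⟨?_, (mem_sdiff.1 b.2).2⟩, lt_of_mem_shiftFibre hP haF han.ne,
    by simp [b.2, hba]⟩
  simpa only [S_choiceIdx] using mem_S_choiceIdx_of_apply_ne hP hσ hσb

lemma choiceIdx_ne (hP : P ⊆ shiftPairs n i) {σ : T n i → ℕ} (hσ : σ ∈ shiftChoices n i P)
    (hne : σ ≠ Subtype.val) : choiceIdx σ ≠ i := fun h => by
  obtain ⟨b, hb⟩ := Function.ne_iff.1 hne
  have := mem_S_choiceIdx_of_apply_ne hP hσ hb
  rw [h] at this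
  exact (mem_sdiff.1 b.2).2 this

lemma shiftedRow_eq_sum : shiftedRow n i P = ∑ σ ∈ shiftChoices n i P, g n (choiceIdx σ) := by
  funext c
  rw [Finset.sum_apply]
  by_cases hc : c < 2 ^ n
  · rw [shiftedRow, if_pos hc, ← prod_coe_sort, prod_univ_sum]
    refine sum_congr rfl fun σ _ => ?_
    rw [g_apply (choiceIdx_lt σ) hc, S_choiceIdx]
    simp only [xbar, Fintype.prod_boole]
    refine if_congr ⟨fun h x hx => mem_sdiff.2 ⟨S_subset_range n c hx, fun him => ?_⟩,
      fun h b hb => (mem_sdiff.1 (h hb)).2 (mem_image_of_mem σ (mem_univ b))⟩ rfl rfl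
    obtain ⟨b, -, rfl⟩ := mem_image.1 him
    exact h b hx
  · simp [shiftedRow, hc, g_eq_zero_of_le (not_lt.1 hc)]

lemma shiftedRow_mem_coset {I : Finset ℕ} (hPOP : POP n I) (hi : i ∈ I) (hin : i < 2 ^ n)
    (hP : P ⊆ shiftPairs n i) : shiftedRow n i P ∈ coset n I i := by
  have hval : Subtype.val ∈ shiftChoices n i P :=
    Fintype.mem_piFinset.2 fun b => mem_insert_self _ _
  have hI : ∀ σ ∈ (shiftChoices n i P).erase Subtype.val, choiceIdx σ ∈ I.filter (i < ·) := by
    intro σ hσ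
    obtain ⟨hne, hσ⟩ := mem_erase.1 hσ
    have hpo := po_choiceIdx hin hP hσ
    exact mem_filter.2 ⟨hPOP i hi _ (choiceIdx_lt σ) hpo,
      lt_of_le_of_ne (le_of_po hpo) (choiceIdx_ne hP hσ hne).symm⟩
  obtain ⟨M, hM, hsum⟩ := exists_subset_sum_eq hI (g n)
  refine mem_image.2 ⟨M, mem_powerset.2 hM, ?_⟩
  rw [shiftedRow_eq_sum, ← add_sum_erase _ _ hval, choiceIdx_val hin, hsum]

lemma flipSet_subset {V : Finset ℕ} : flipSet n i P V ⊆ T n i := filter_subset _ _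

lemma shiftedRow_idx_ne_zero_iff (hP : P ⊆ shiftPairs n i) {U : Finset ℕ} (hU : U ⊆ range n) :
    shiftedRow n i P (idx U) ≠ 0 ↔ U ∩ T n i = flipSet n i P (U ∩ S n i) := by
  have hfactor : ∀ b ∈ T n i, ∑ a ∈ insert b (shiftFibre P b), xbar a U ≠ 0 ↔
      (b ∈ U ↔ ∑ a ∈ shiftFibre P b, xbar a (U ∩ S n i) = 1) := fun b hb => by
    rw [sum_insert (notMem_shiftFibre_of_mem_T hP hb), xbar_add_ne_zero_iff,
      sum_congr rfl fun a ha => xbar_eq_xbar_inter hU (shiftFibre_subset hP b ha)]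
  rw [shiftedRow, if_pos (idx_lt hU), S_idx hU, prod_ne_zero_iff, Finset.ext_iff]
  simp only [flipSet, mem_inter, mem_filter]
  constructor
  · intro h b
    by_cases hb : b ∈ T n i
    · simp [hb, ← (hfactor b hb).1 (h b hb)]
    · simp [hb]
  · intro h b hb
    exact (hfactor b hb).2 (by simpa [hb] using h b)

lemma wt_shiftedRow (hP : P ⊆ shiftPairs n i) : wt n (shiftedRow n i P) = 2 ^ (S n i).card := by
  rw [wt_eq_card_powerset, ← card_filter_inter_eq (disjoint_S_T n i) (flipSet n i P)
    (fun _ => flipSet_subset), S_union_T]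
  exact congrArg card (filter_congr fun U hU => shiftedRow_idx_ne_zero_iff hP (mem_powerset.1 hU))

lemma flipSet_eq_of_shiftedRow_eq (hP : P ⊆ shiftPairs n i) (hP' : P' ⊆ shiftPairs n i)
    (h : shiftedRow n i P = shiftedRow n i P') {V : Finset ℕ} (hV : V ⊆ S n i) :
    flipSet n i P V = flipSet n i P' V := by
  obtain ⟨hUS, hUT⟩ := union_inter_eq_of_disjoint (disjoint_S_T n i) hV flipSet_subset
  have hU : V ∪ flipSet n i P V ⊆ range n := S_union_T n i ▸ union_subset_union hV flipSet_subset
  have := (shiftedRow_idx_ne_zero_iff hP hU).2 (by rw [hUT, hUS])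
  rwa [h, shiftedRow_idx_ne_zero_iff hP' hU, hUT, hUS] at this

lemma shiftedRow_injective (hP : P ⊆ shiftPairs n i) (hP' : P' ⊆ shiftPairs n i)
    (h : shiftedRow n i P = shiftedRow n i P') : P = P' := by
  have hfibre : ∀ b ∈ T n i, shiftFibre P b = shiftFibre P' b := fun b hb =>
    eq_of_forall_sum_xbar_eq (notMem_S_self n i) (shiftFibre_subset hP b)
      (shiftFibre_subset hP' b) fun V hV => by
      have := congrArg (b ∈ ·) (flipSet_eq_of_shiftedRow_eq hP hP' h hV)
      simp only [flipSet, mem_filter, hb, true_and, eq_iff_iff] at this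
      exact (by decide : ∀ s s' : ZMod 2, (s = 1 ↔ s' = 1) → s = s') _ _ this
  have hT : ∀ {Q : Finset (ℕ × ℕ)} {p : ℕ × ℕ}, Q ⊆ shiftPairs n i → p ∈ Q → p.1 ∈ T n i :=
    fun hQ hp => (mem_product.1 (mem_filter.1 (hQ hp)).1).1
  ext ⟨b, a⟩
  refine ⟨fun hq => ?_, fun hq => ?_⟩
  · rw [← mem_shiftFibre, ← hfibre b (hT hP hq), mem_shiftFibre]; exact hq
  · rw [← mem_shiftFibre, hfibre b (hT hP' hq), mem_shiftFibre]; exact hq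

lemma two_pow_card_shiftPairs_le_Ai {I : Finset ℕ} (hPOP : POP n I) (hi : i ∈ I)
    (hin : i < 2 ^ n) : 2 ^ (shiftPairs n i).card ≤ Ai n I i (wt n (g n i)) := by
  rw [← card_powerset]
  refine card_le_card_of_injOn (shiftedRow n i) (fun P hP => mem_filter.2
    ⟨shiftedRow_mem_coset hPOP hi hin (mem_powerset.1 hP), ?_⟩)
    fun P hP P' hP' h => shiftedRow_injective (mem_powerset.1 hP) (mem_powerset.1 hP') h
  rw [wt_shiftedRow (mem_powerset.1 hP), wt_g hin]

end shiftedRow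

lemma two_pow_card_K_le_Ai {n i : ℕ} {I : Finset ℕ} (hPOP : POP n I) (hi : i ∈ I)
    (hin : i < 2 ^ n) : 2 ^ (K n i).card ≤ Ai n I i (wt n (g n i)) :=
  (Nat.pow_le_pow_right two_pos (card_K_le_card_shiftPairs hin)).trans
    (two_pow_card_shiftPairs_le_Ai hPOP hi hin)

theorem Ai_lower_bound_general (n : ℕ) (I : Finset ℕ) (hI : I.Nonempty)
    (hIr : ∀ x ∈ I, x < 2 ^ n) (hPOP : POP n I)
    (wmin : ℕ) (hw : wmin = I.inf' hI fun x => wt n (g n x))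
    (B : Finset ℕ) (hB : B = I.filter fun x => wt n (g n x) = wmin) :
    (∀ i ∈ B, 2 ^ (K n i).card ≤ Ai n I i wmin) ∧
    A n I wmin = ∑ i ∈ B, Ai n I i wmin ∧
    ∑ i ∈ B, 2 ^ (K n i).card ≤ A n I wmin := by
  have hmin : ∀ x ∈ I, wmin ≤ wt n (g n x) := fun x hx => hw ▸ inf'_le _ hx
  have hwmin : wmin ≠ 0 := by
    obtain ⟨x, hx, hxw⟩ := exists_mem_eq_inf' hI fun x => wt n (g n x)
    rw [hw, hxw, wt_g (hIr x hx)]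
    positivity
  have hAi : ∀ i ∈ B, 2 ^ (K n i).card ≤ Ai n I i wmin := fun i hi => by
    obtain ⟨hiI, hwi⟩ := mem_filter.1 (hB ▸ hi)
    exact hwi ▸ two_pow_card_K_le_Ai hPOP hiI (hIr i hiI)
  have hA : A n I wmin = ∑ i ∈ B, Ai n I i wmin := by
    rw [A_eq_sum_Ai hIr hwmin, hB, sum_filter_of_ne fun i hi hne => ?_]
    by_contra hwi
    exact hne (Ai_eq_zero_of_lt_wt hIr hi (lt_of_le_of_ne (hmin i hi) (Ne.symm hwi)))
  exact ⟨hAi, hA, hA ▸ sum_le_sum hAi⟩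

/-- if I satisfies POP and B = {i ∈ I : w(g_i) = w_min}, then
A_{i,w_min}(I) ≥ 2^{|K_i|} for every i ∈ B, and
A_{w_min}(I) = Σ_{i∈B} A_{i,w_min}(I) ≥ Σ_{i∈B} 2^{|K_i|}. -/
theorem Ai_lower_bound (n : ℕ) (hn : 1 ≤ n) (I : Finset ℕ) (hI : I.Nonempty)
    (hIr : ∀ x ∈ I, x < 2 ^ n) (hPOP : POP n I)
    (wmin : ℕ) (hw : wmin = I.inf' hI fun x => wt n (g n x))
    (B : Finset ℕ) (hB : B = I.filter fun x => wt n (g n x) = wmin) :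
    (∀ i ∈ B, 2 ^ (K n i).card ≤ Ai n I i wmin) ∧
    A n I wmin = ∑ i ∈ B, Ai n I i wmin ∧
    ∑ i ∈ B, 2 ^ (K n i).card ≤ A n I wmin :=
  Ai_lower_bound_general n I hI hIr hPOP wmin hw B hB
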